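/- arXiv:1710.08976 — 4 statements merged into one kernel-verified Lean document; each statement's English description precedes it below -/
import Mathlib

section
/- Exact variance of the M-RA at knot locations: for s ∈ Q_m for some m ∈ {0,…,M}, the M-RA covariance C_M(s,s) := Σ_{k=0}^M v_k(s,Q_k) v_k(Q_k,Q_k)⁻¹ v_k(Q_k,s) equals C₀(s,s), provided T_k(s,s) = 1 for all k. -/
open Matrix in
/-- Exact variance of the M-RA at knot locations. -/
theorem mra_exact_variance {D : Type*} (M : ℕ) (r : ℕ → ℕ)
    (Q : (m : ℕ) → Fin (r m) → D) (C₀ : D → D → ℝ) (T : ℕ → D → D → ℝ)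
    (hT : ∀ m s₁ s₂, T m s₁ s₂ ∈ Set.Icc (0 : ℝ) 1)
    (hTdiag : ∀ m s, T m s s = 1)
    (v : ℕ → D → D → ℝ)
    (hv0 : ∀ s₁ s₂, v 0 s₁ s₂ = C₀ s₁ s₂ * T 0 s₁ s₂)
    (hinv : ∀ m, IsUnit (Matrix.of
      (fun i j => v m (Q m i) (Q m j)) : Matrix (Fin (r m)) (Fin (r m)) ℝ))
    (hrec : ∀ m s₁ s₂, v (m + 1) s₁ s₂ =
      (v m s₁ s₂ - ∑ i, ∑ j, v m s₁ (Q m i) *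
        ((Matrix.of (fun i j => v m (Q m i) (Q m j))
            : Matrix (Fin (r m)) (Fin (r m)) ℝ)⁻¹ i j) * v m (Q m j) s₂) *
        T (m + 1) s₁ s₂)
    (s : D) (hs : ∃ m ≤ M, s ∈ Set.range (Q m)) :
    ∑ m ∈ Finset.range (M + 1), ∑ i, ∑ j, v m s (Q m i) *
        ((Matrix.of (fun i j => v m (Q m i) (Q m j))
            : Matrix (Fin (r m)) (Fin (r m)) ℝ)⁻¹ i j) * v m (Q m j) s
      = C₀ s s := by
  obtain ⟨m₀, hm₀, i₀, hQ⟩ := hs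
  -- once s is a knot at level m₀, v (m₀+1) s t = 0 for all t
  have hbase : ∀ t, v (m₀ + 1) s t = 0 := by
    intro t
    set A : Matrix (Fin (r m₀)) (Fin (r m₀)) ℝ :=
      Matrix.of (fun i j => v m₀ (Q m₀ i) (Q m₀ j)) with hA
    have hdet : IsUnit A.det := (Matrix.isUnit_iff_isUnit_det A).mp (hinv m₀)
    have hAinv : A * A⁻¹ = 1 := Matrix.mul_nonsing_inv A hdet
    have key : ∑ i, ∑ j, v m₀ s (Q m₀ i) * (A⁻¹ i j) * v m₀ (Q m₀ j) t
        = v m₀ s t := by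
      rw [← hQ]
      have : ∀ j, ∑ i, v m₀ (Q m₀ i₀) (Q m₀ i) * (A⁻¹ i j) = (A * A⁻¹) i₀ j := by
        intro j; simp [Matrix.mul_apply, hA]
      rw [Finset.sum_comm]
      calc ∑ j, ∑ i, v m₀ (Q m₀ i₀) (Q m₀ i) * (A⁻¹ i j) * v m₀ (Q m₀ j) t
          = ∑ j, (A * A⁻¹) i₀ j * v m₀ (Q m₀ j) t := by
            refine Finset.sum_congr rfl fun j _ => ?_
            rw [← this j, Finset.sum_mul]
        _ = ∑ j, (1 : Matrix (Fin (r m₀)) (Fin (r m₀)) ℝ) i₀ j * v m₀ (Q m₀ j) t := by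
            rw [hAinv]
        _ = v m₀ (Q m₀ i₀) t := by
            simp [Matrix.one_apply]
    rw [hrec, key, sub_self, zero_mul]
  have hzero : ∀ k, m₀ + 1 ≤ k → ∀ t, v k s t = 0 := by
    intro k hk
    induction k with
    | zero => omega
    | succ n ih =>
      rcases Nat.lt_or_ge m₀ n with h | h
      · intro t
        have hn : ∀ t, v n s t = 0 := ih (by omega)
        rw [hrec]
        simp [hn]
      · have : n = m₀ := by omega
        subst this
        exact hbase
  have hterm : ∀ k, (∑ i, ∑ j, v k s (Q k i) *
        ((Matrix.of (fun i j => v k (Q k i) (Q k j))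
            : Matrix (Fin (r k)) (Fin (r k)) ℝ)⁻¹ i j) * v k (Q k j) s)
      = v k s s - v (k + 1) s s := by
    intro k
    have := hrec k s s
    rw [hTdiag, mul_one] at this
    linarith
  have hsum : ∑ m ∈ Finset.range (M + 1), (v m s s - v (m + 1) s s)
      = v 0 s s - v (M + 1) s s := Finset.sum_range_sub' (fun m => v m s s) (M + 1)
  calc ∑ m ∈ Finset.range (M + 1), ∑ i, ∑ j, v m s (Q m i) *
        ((Matrix.of (fun i j => v m (Q m i) (Q m j))
            : Matrix (Fin (r m)) (Fin (r m)) ℝ)⁻¹ i j) * v m (Q m j) s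
      = ∑ m ∈ Finset.range (M + 1), (v m s s - v (m + 1) s s) :=
        Finset.sum_congr rfl fun m _ => hterm m
    _ = v 0 s s - v (M + 1) s s := hsum
    _ = C₀ s s := by
        rw [hzero (M + 1) (by omega) s, hv0, hTdiag, mul_one, sub_zero]
end

section
/- M-RA covariance at a knot location: if s₁ ∈ Q₀ ∪ … ∪ Q_M, then C_M(s₁,s₂) = Σ_{m=0}^{M−1} v_m(s₁,Q_m) v_m(Q_m,Q_m)⁻¹ v_m(Q_m,s₂) + v_M(s₁,s₂) for every s₂ ∈ D. -/
open Matrix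

lemma mra_aux_row {n : ℕ} (A : Matrix (Fin n) (Fin n) ℝ) (hA : IsUnit A)
    (i₀ : Fin n) (f : Fin n → ℝ) :
    ∑ i, ∑ j, A i₀ i * A⁻¹ i j * f j = f i₀ := by
  have h1 : A * A⁻¹ = 1 := Matrix.mul_nonsing_inv _ ((Matrix.isUnit_iff_isUnit_det _).mp hA)
  rw [Finset.sum_comm]
  have h2 : ∀ j, ∑ i, A i₀ i * A⁻¹ i j * f j
      = (1 : Matrix (Fin n) (Fin n) ℝ) i₀ j * f j := by
    intro j
    rw [← h1, Matrix.mul_apply, Finset.sum_mul]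
  simp only [h2, Matrix.one_apply, ite_mul, one_mul, zero_mul]
  simp

lemma mra_aux_zero {D : Type*} (r : ℕ → ℕ)
    (Q : (m : ℕ) → Fin (r m) → D) (T : ℕ → D → D → ℝ) (v : ℕ → D → D → ℝ)
    (hinv : ∀ m, IsUnit (Matrix.of
      (fun i j => v m (Q m i) (Q m j)) : Matrix (Fin (r m)) (Fin (r m)) ℝ))
    (hrec : ∀ m s₁ s₂, v (m + 1) s₁ s₂ =
      (v m s₁ s₂ - ∑ i, ∑ j, v m s₁ (Q m i) *
        ((Matrix.of (fun i j => v m (Q m i) (Q m j))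
            : Matrix (Fin (r m)) (Fin (r m)) ℝ)⁻¹ i j) * v m (Q m j) s₂) *
        T (m + 1) s₁ s₂)
    (k : ℕ) (i₀ : Fin (r k)) :
    ∀ m, k < m → ∀ t, v m (Q k i₀) t = 0 := by
  intro m
  induction m with
  | zero => omega
  | succ m ih =>
    intro hm t
    rw [hrec]
    rcases Nat.lt_succ_iff_lt_or_eq.mp hm with h | h
    · simp [ih h]
    · subst h
      have := mra_aux_row (Matrix.of (fun i j => v k (Q k i) (Q k j))) (hinv k) i₀
        (fun j => v k (Q k j) t)
      simp only [Matrix.of_apply] at this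
      simp [this]

open Matrix in
/-- M-RA covariance at a knot location. -/
theorem mra_cov_at_knot {D : Type*} (M : ℕ) (r : ℕ → ℕ)
    (Q : (m : ℕ) → Fin (r m) → D) (C₀ : D → D → ℝ) (T : ℕ → D → D → ℝ)
    (hT : ∀ m s₁ s₂, T m s₁ s₂ ∈ Set.Icc (0 : ℝ) 1)
    (hTdiag : ∀ m s, T m s s = 1)
    (v : ℕ → D → D → ℝ)
    (hv0 : ∀ s₁ s₂, v 0 s₁ s₂ = C₀ s₁ s₂ * T 0 s₁ s₂)
    (hv0symm : ∀ s₁ s₂, v 0 s₁ s₂ = v 0 s₂ s₁)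
    (hinv : ∀ m, IsUnit (Matrix.of
      (fun i j => v m (Q m i) (Q m j)) : Matrix (Fin (r m)) (Fin (r m)) ℝ))
    (hrec : ∀ m s₁ s₂, v (m + 1) s₁ s₂ =
      (v m s₁ s₂ - ∑ i, ∑ j, v m s₁ (Q m i) *
        ((Matrix.of (fun i j => v m (Q m i) (Q m j))
            : Matrix (Fin (r m)) (Fin (r m)) ℝ)⁻¹ i j) * v m (Q m j) s₂) *
        T (m + 1) s₁ s₂)
    (s₁ : D) (hs₁ : ∃ m ≤ M, s₁ ∈ Set.range (Q m)) (s₂ : D) :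
    ∑ m ∈ Finset.range (M + 1), ∑ i, ∑ j, v m s₁ (Q m i) *
        ((Matrix.of (fun i j => v m (Q m i) (Q m j))
            : Matrix (Fin (r m)) (Fin (r m)) ℝ)⁻¹ i j) * v m (Q m j) s₂
      = (∑ m ∈ Finset.range M, ∑ i, ∑ j, v m s₁ (Q m i) *
          ((Matrix.of (fun i j => v m (Q m i) (Q m j))
              : Matrix (Fin (r m)) (Fin (r m)) ℝ)⁻¹ i j) * v m (Q m j) s₂)
        + v M s₁ s₂ := by
  obtain ⟨k, hkM, i₀, hi₀⟩ := hs₁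
  subst hi₀
  rw [Finset.sum_range_succ]
  congr 1
  rcases lt_or_eq_of_le hkM with h | h
  · have hz := mra_aux_zero r Q T v hinv (fun m s₁ s₂ => hrec m s₁ s₂) k i₀ M h
    simp [hz]
  · subst h
    have := mra_aux_row (Matrix.of (fun i j => v k (Q k i) (Q k j))) (hinv k) i₀
      (fun j => v k (Q k j) s₂)
    simpa using this
end

section
/- One-step exactness of the block M-RA remainder: with w₁(s₁,s₂) := C₀(s₁,s₂) − C₀(s₁,Q) C₀(Q,Q)⁻¹ C₀(Q,s₂) for the exponential covariance C₀(s,t) = σ² e^{−|s−t|/κ} on ℝ, if some knot q ∈ Q satisfies s₁ ≤ q ≤ s₂, then w₁(s₁,s₂) = 0. -/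
open Matrix

private lemma aux_key {n : ℕ} (M : Matrix (Fin n) (Fin n) ℝ)
    (hM : IsUnit M.det) (hsymm : ∀ j k, M j k = M k j)
    (p : Fin n) (P : Fin n → Prop) [DecidablePred P] (hp : P p)
    (hMpp : M p p ≠ 0)
    (hfact : ∀ j k, P j → ¬ P k → M j k * M p p = M j p * M p k)
    (u v : Fin n → ℝ) (lam mu : ℝ)
    (hup : u p = lam * M p p)
    (hu : ∀ k, ¬ P k → u k = lam * M p k)
    (hv : ∀ j, P j → v j = mu * M j p) :
    u ⬝ᵥ (M⁻¹ *ᵥ v) = lam * mu * M p p := by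
  classical
  set c : Fin n → ℝ := fun k => if P k then 0 else M p k / M p p with hc
  have hcp : c p = 0 := by simp [hc, hp]
  set E : Matrix (Fin n) (Fin n) ℝ := Matrix.of (fun j k => if j = p then c k else 0) with hE
  set T : Matrix (Fin n) (Fin n) ℝ := 1 - E with hT
  have hE2 : E * E = 0 := by
    ext j k
    simp only [Matrix.mul_apply, hE, Matrix.of_apply, Matrix.zero_apply]
    by_cases hj : j = p
    · simp [hj, hcp, ite_mul]
    · simp [hj]
  have hTmul : T * (1 + E) = 1 := by
    have h1 : T * (1 + E) = 1 - E * E := by rw [hT]; noncomm_ring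
    rw [h1, hE2, sub_zero]
  have hTmul' : (1 + E) * T = 1 := by
    have h1 : (1 + E) * T = 1 - E * E := by rw [hT]; noncomm_ring
    rw [h1, hE2, sub_zero]
  have hTdet : IsUnit T.det := by
    apply IsUnit.of_mul_eq_one (1 + E).det
    rw [← Matrix.det_mul, hTmul, Matrix.det_one]
  -- the conjugated matrix
  set D : Matrix (Fin n) (Fin n) ℝ := Tᵀ * M * T with hD
  have hDdet : IsUnit D.det := by
    rw [hD, Matrix.det_mul, Matrix.det_mul, Matrix.det_transpose]
    exact (hTdet.mul hM).mul hTdet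
  -- entrywise formula for D
  have hTME : ∀ j k, (Tᵀ * M) j k = M j k - c j * M p k := by
    intro j k
    simp only [Matrix.mul_apply, Matrix.transpose_apply, hT, Matrix.sub_apply,
      Matrix.one_apply, hE, Matrix.of_apply, sub_mul, ite_mul, one_mul, zero_mul,
      Finset.sum_sub_distrib]
    rw [Finset.sum_ite_eq' (Finset.univ : Finset (Fin n)) j (fun m => M m k),
      Finset.sum_ite_eq' (Finset.univ : Finset (Fin n)) p (fun m => c j * M m k)]
    simp
  have hDentry : ∀ j k, D j k = (M j k - c j * M p k) - (M j p - c j * M p p) * c k := by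
    intro j k
    have h0 : D j k = ∑ m, (Tᵀ * M) j m * T m k := by rw [hD, Matrix.mul_apply]
    rw [h0]
    simp only [hT, Matrix.sub_apply, Matrix.one_apply, hE, Matrix.of_apply, mul_sub,
      mul_ite, mul_one, mul_zero, Finset.sum_sub_distrib]
    rw [Finset.sum_ite_eq' (Finset.univ : Finset (Fin n)) k (fun m => (Tᵀ * M) j m),
      Finset.sum_ite_eq' (Finset.univ : Finset (Fin n)) p (fun m => (Tᵀ * M) j m * c k)]
    simp [hTME]
  -- block vanishing
  have hD0 : ∀ j k, (P j ∧ ¬ P k) ∨ (¬ P j ∧ P k) → D j k = 0 := by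
    rintro j k (⟨hj, hk⟩ | ⟨hj, hk⟩)
    · rw [hDentry]
      simp only [hc, if_pos hj, if_neg hk, zero_mul, sub_zero]
      rw [sub_eq_zero, ← mul_div_assoc, eq_div_iff hMpp]
      exact hfact j k hj hk
    · rw [hDentry]
      simp only [hc, if_neg hj, if_pos hk, mul_zero, sub_zero]
      rw [sub_eq_zero, div_mul_eq_mul_div, eq_div_iff hMpp]
      linear_combination hfact k j hk hj + M p p * hsymm j k + M p j * hsymm k p
  -- column p of D
  have hDp : ∀ j, D j p = if P j then M j p else 0 := by
    intro j
    rw [hDentry, hcp]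
    by_cases hj : P j
    · simp [hc, if_pos hj, hj]
    · simp only [hc, if_neg hj, mul_zero, sub_zero]
      rw [div_mul_cancel₀ _ hMpp, hsymm j p, sub_self]
  -- the projection matrix
  set Pr : Matrix (Fin n) (Fin n) ℝ := Matrix.diagonal (fun j => if P j then 1 else 0) with hPr
  have hcomm : Pr * D = D * Pr := by
    ext j k
    rw [Matrix.diagonal_mul, Matrix.mul_diagonal]
    by_cases hj : P j <;> by_cases hk : P k
    · simp [hj, hk]
    · simp [hj, hk, hD0 j k (Or.inl ⟨hj, hk⟩)]
    · simp [hj, hk, hD0 j k (Or.inr ⟨hj, hk⟩)]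
    · simp [hj, hk]
  have hDD : D⁻¹ * D = 1 := Matrix.nonsing_inv_mul D hDdet
  have hDD' : D * D⁻¹ = 1 := Matrix.mul_nonsing_inv D hDdet
  have hcomm' : Pr * D⁻¹ = D⁻¹ * Pr := by
    have e1 : D⁻¹ * (Pr * D) * D⁻¹ = D⁻¹ * Pr := by
      rw [← Matrix.mul_assoc D⁻¹ Pr D, Matrix.mul_assoc (D⁻¹ * Pr) D D⁻¹, hDD', Matrix.mul_one]
    have e2 : D⁻¹ * (D * Pr) * D⁻¹ = Pr * D⁻¹ := by
      rw [← Matrix.mul_assoc D⁻¹ D Pr, hDD, Matrix.one_mul]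
    calc Pr * D⁻¹ = D⁻¹ * (D * Pr) * D⁻¹ := e2.symm
    _ = D⁻¹ * (Pr * D) * D⁻¹ := by rw [hcomm]
    _ = D⁻¹ * Pr := e1
  -- M⁻¹ = T * D⁻¹ * Tᵀ
  have hMinv : M⁻¹ = T * D⁻¹ * Tᵀ := by
    apply Matrix.inv_eq_left_inv
    have h1 : (T * D⁻¹ * Tᵀ) * M * T = T := by
      calc (T * D⁻¹ * Tᵀ) * M * T = T * (D⁻¹ * D) := by
            rw [hD]; simp only [Matrix.mul_assoc]
      _ = T := by rw [hDD, Matrix.mul_one]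
    calc (T * D⁻¹ * Tᵀ) * M = ((T * D⁻¹ * Tᵀ) * M * T) * (1 + E) := by
          rw [Matrix.mul_assoc _ T (1 + E), hTmul, Matrix.mul_one]
        _ = T * (1 + E) := by rw [h1]
        _ = 1 := hTmul
  -- vector computations
  have hvecT : u ᵥ* T = fun k => if P k then u k else 0 := by
    funext k
    simp only [Matrix.vecMul, dotProduct, hT, Matrix.sub_apply, Matrix.one_apply,
      hE, Matrix.of_apply, mul_sub, mul_ite, mul_one, mul_zero, Finset.sum_sub_distrib]
    rw [Finset.sum_ite_eq' (Finset.univ : Finset (Fin n)) k u,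
      Finset.sum_ite_eq' (Finset.univ : Finset (Fin n)) p (fun j => u j * c k)]
    by_cases hk : P k
    · simp [hc, hk]
    · simp only [Finset.mem_univ, if_true, if_neg hk, hc]
      rw [hup, hu k hk]
      field_simp
      ring
  have hTv : Tᵀ *ᵥ v = fun j => v j - c j * v p := by
    funext j
    simp only [Matrix.mulVec, dotProduct, Matrix.transpose_apply, hT, Matrix.sub_apply,
      Matrix.one_apply, hE, Matrix.of_apply, sub_mul, ite_mul, one_mul, zero_mul,
      Finset.sum_sub_distrib]
    rw [Finset.sum_ite_eq' (Finset.univ : Finset (Fin n)) j v,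
      Finset.sum_ite_eq' (Finset.univ : Finset (Fin n)) p (fun k => c j * v k)]
    simp
  set ep : Fin n → ℝ := Pi.single p 1 with hep
  have hDep : D *ᵥ ep = fun j => D j p := by
    funext j
    rw [hep, Matrix.mulVec, dotProduct_single]
    simp
  have hPiTv : Pr *ᵥ (Tᵀ *ᵥ v) = mu • (D *ᵥ ep) := by
    funext j
    rw [hTv, hDep, hPr]
    simp only [Matrix.mulVec_diagonal, Pi.smul_apply, smul_eq_mul, hDp]
    by_cases hj : P j
    · simp [hj, hc, hv j hj]
    · simp [hj]
  -- final chain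
  rw [hMinv, ← Matrix.mulVec_mulVec, ← Matrix.mulVec_mulVec, Matrix.dotProduct_mulVec u T, hvecT]
  have hproj : (fun k => if P k then u k else 0) = (fun k => if P k then u k else 0) ᵥ* Pr := by
    funext k
    rw [hPr, Matrix.vecMul_diagonal]
    by_cases hk : P k <;> simp [hk]
  conv_lhs => rw [hproj]
  rw [← Matrix.dotProduct_mulVec, Matrix.mulVec_mulVec, hcomm', ← Matrix.mulVec_mulVec, hPiTv,
    Matrix.mulVec_smul, Matrix.mulVec_mulVec, hDD, Matrix.one_mulVec, dotProduct_smul,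
    hep, dotProduct_single]
  simp only [smul_eq_mul, mul_one, if_pos hp, hup]
  ring

private lemma exp_helper (κ a b c : ℝ) (h : a + b = c) :
    Real.exp (a / κ) * Real.exp (b / κ) = Real.exp (c / κ) := by
  rw [← Real.exp_add, ← add_div, h]

open Matrix in
/-- One-step exactness of the block M-RA remainder for the exponential covariance on ℝ. -/
theorem block_one_step_exact {r : ℕ} (σ2 κ : ℝ) (hσ : 0 < σ2) (hκ : 0 < κ)
    (Q : Fin r → ℝ) (hQ : Function.Injective Q)
    (hinv : IsUnit (Matrix.of
      (fun i j => σ2 * Real.exp (-|Q i - Q j| / κ)) : Matrix (Fin r) (Fin r) ℝ))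
    (s₁ s₂ : ℝ) (hs : s₁ ≤ s₂) (hknot : ∃ i, s₁ ≤ Q i ∧ Q i ≤ s₂) :
    σ2 * Real.exp (-|s₁ - s₂| / κ) -
      ∑ i, ∑ j, (σ2 * Real.exp (-|s₁ - Q i| / κ)) *
        ((Matrix.of (fun i j => σ2 * Real.exp (-|Q i - Q j| / κ))
            : Matrix (Fin r) (Fin r) ℝ)⁻¹ i j) *
          (σ2 * Real.exp (-|Q j - s₂| / κ)) = 0 := by
  classical
  obtain ⟨p, hp1, hp2⟩ := hknot
  set M : Matrix (Fin r) (Fin r) ℝ :=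
    Matrix.of (fun i j => σ2 * Real.exp (-|Q i - Q j| / κ)) with hM
  set u : Fin r → ℝ := fun k => σ2 * Real.exp (-|s₁ - Q k| / κ) with hu0
  set v : Fin r → ℝ := fun j => σ2 * Real.exp (-|Q j - s₂| / κ) with hv0
  have hMdet : IsUnit M.det := (Matrix.isUnit_iff_isUnit_det M).mp hinv
  have hMapp : ∀ i j, M i j = σ2 * Real.exp (-|Q i - Q j| / κ) := fun i j => rfl
  have hMpp : M p p = σ2 := by
    rw [hMapp, sub_self, abs_zero, neg_zero, zero_div, Real.exp_zero, mul_one]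
  have hsymm : ∀ j k, M j k = M k j := by
    intro j k; rw [hMapp, hMapp, abs_sub_comm]
  have hfact : ∀ j k, Q j ≤ Q p → ¬ Q k ≤ Q p → M j k * M p p = M j p * M p k := by
    intro j k hj hk
    push_neg at hk
    rw [hMapp j k, hMapp j p, hMapp p k, hMpp,
      abs_of_nonpos (by linarith : Q j - Q k ≤ 0),
      abs_of_nonpos (by linarith : Q j - Q p ≤ 0),
      abs_of_nonpos (by linarith : Q p - Q k ≤ 0), neg_neg, neg_neg, neg_neg]
    linear_combination (-(σ2 * σ2)) * exp_helper κ (Q j - Q p) (Q p - Q k) (Q j - Q k) (by ring)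
  have hup : u p = Real.exp (-(Q p - s₁) / κ) * M p p := by
    simp only [hu0]
    rw [hMpp, abs_of_nonpos (by linarith : s₁ - Q p ≤ 0), neg_neg,
      show -(Q p - s₁) = s₁ - Q p from by ring]
    ring
  have huk : ∀ k, ¬ Q k ≤ Q p → u k = Real.exp (-(Q p - s₁) / κ) * M p k := by
    intro k hk
    push_neg at hk
    simp only [hu0]
    rw [hMapp, abs_of_nonpos (by linarith : s₁ - Q k ≤ 0),
      abs_of_nonpos (by linarith : Q p - Q k ≤ 0), neg_neg, neg_neg,
      show -(Q p - s₁) = s₁ - Q p from by ring]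
    linear_combination (-σ2) * exp_helper κ (s₁ - Q p) (Q p - Q k) (s₁ - Q k) (by ring)
  have hvj : ∀ j, Q j ≤ Q p → v j = Real.exp (-(s₂ - Q p) / κ) * M j p := by
    intro j hj
    simp only [hv0]
    rw [hMapp, abs_of_nonpos (by linarith : Q j - s₂ ≤ 0),
      abs_of_nonpos (by linarith : Q j - Q p ≤ 0), neg_neg, neg_neg,
      show -(s₂ - Q p) = Q p - s₂ from by ring]
    linear_combination (-σ2) * exp_helper κ (Q p - s₂) (Q j - Q p) (Q j - s₂) (by ring)
  have key := aux_key M hMdet hsymm p (fun k => Q k ≤ Q p) (le_refl _)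
    (by rw [hMpp]; exact ne_of_gt hσ) hfact u v
    (Real.exp (-(Q p - s₁) / κ)) (Real.exp (-(s₂ - Q p) / κ)) hup huk hvj
  have hsum : ∑ i, ∑ j, u i * M⁻¹ i j * v j = u ⬝ᵥ (M⁻¹ *ᵥ v) := by
    simp only [dotProduct, Matrix.mulVec, Finset.mul_sum]
    exact Finset.sum_congr rfl fun i _ => Finset.sum_congr rfl fun j _ => by ring
  rw [sub_eq_zero, hsum, key, hMpp,
    abs_of_nonpos (by linarith : s₁ - s₂ ≤ 0), neg_neg,
    show -(Q p - s₁) = s₁ - Q p from by ring, show -(s₂ - Q p) = Q p - s₂ from by ring]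
  linear_combination (-σ2) * exp_helper κ (s₁ - Q p) (Q p - s₂) (s₁ - s₂) (by ring)
end

section
/- Schur product preservation in the M-RA recursion: if v_m is a positive semidefinite kernel on D and T_{m+1} is a positive semidefinite kernel on D, then v_{m+1}(s₁,s₂) = (v_m(s₁,s₂) − v_m(s₁,Q_m) v_m(Q_m,Q_m)⁻¹ v_m(Q_m,s₂)) · T_{m+1}(s₁,s₂) is a positive semidefinite kernel on D. -/
/-- A kernel `K : D → D → ℝ` is positive semidefinite. -/
def IsPSDKernel {D : Type*} (K : D → D → ℝ) : Prop :=
  ∀ (n : ℕ) (s : Fin n → D) (a : Fin n → ℝ),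
    0 ≤ ∑ i, ∑ j, a i * a j * K (s i) (s j)

open Matrix

/-- PSD kernel gives nonneg quadratic forms over any finite index type. -/
lemma IsPSDKernel.quad_nonneg {D : Type*} {K : D → D → ℝ} (hK : IsPSDKernel K)
    {m : Type*} [Fintype m] (s : m → D) (a : m → ℝ) :
    0 ≤ ∑ i, ∑ j, a i * a j * K (s i) (s j) := by
  classical
  let e := Fintype.equivFin m
  have h := hK (Fintype.card m) (s ∘ e.symm) (a ∘ e.symm)
  calc (0:ℝ) ≤ ∑ i, ∑ j, (a ∘ e.symm) i * (a ∘ e.symm) j * K ((s ∘ e.symm) i) ((s ∘ e.symm) j) := h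
    _ = ∑ i, ∑ j, a i * a j * K (s i) (s j) := by
        rw [← Equiv.sum_comp e.symm (fun i => ∑ j, a i * a j * K (s i) (s j))]
        refine Finset.sum_congr rfl fun i _ => ?_
        exact Equiv.sum_comp e.symm (fun j => a (e.symm i) * a j * K (s (e.symm i)) (s j))

/-- A PSD kernel evaluated at finitely many points gives a PSD matrix. -/
lemma kernelMatrix_posSemidef {D : Type*} {v : D → D → ℝ}
    (hvsymm : ∀ s₁ s₂, v s₁ s₂ = v s₂ s₁) (hv : IsPSDKernel v)
    {m : Type*} [Fintype m] (s : m → D) :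
    (Matrix.of (fun i j => v (s i) (s j)) : Matrix m m ℝ).PosSemidef := by
  refine Matrix.PosSemidef.of_dotProduct_mulVec_nonneg ?_ ?_
  · ext i j
    simp [Matrix.conjTranspose_apply, hvsymm (s j) (s i)]
  · intro x
    have h := hv.quad_nonneg s x
    calc (0:ℝ) ≤ ∑ i, ∑ j, x i * x j * v (s i) (s j) := h
      _ = star x ⬝ᵥ (Matrix.of (fun i j => v (s i) (s j)) : Matrix m m ℝ) *ᵥ x := by
        simp only [dotProduct, Matrix.mulVec, dotProduct, Finset.mul_sum,
          star_trivial, Matrix.of_apply]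
        exact Finset.sum_congr rfl fun i _ => Finset.sum_congr rfl fun j _ => by ring

/-- Quadratic-form Schur product theorem for real PSD matrices. -/
lemma schur_quad_nonneg {n : Type*} [Fintype n] [DecidableEq n]
    {A B : Matrix n n ℝ} (hA : A.PosSemidef) (hB : B.PosSemidef) (x : n → ℝ) :
    0 ≤ ∑ i, ∑ j, x i * x j * (A i j * B i j) := by
  obtain ⟨P, hP⟩ := (by open scoped MatrixOrder in exact CStarAlgebra.nonneg_iff_eq_star_mul_self.mp hA.nonneg)
  obtain ⟨R, hR⟩ := (by open scoped MatrixOrder in exact CStarAlgebra.nonneg_iff_eq_star_mul_self.mp hB.nonneg)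
  have hAe : ∀ i j, A i j = ∑ k, P k i * P k j := by
    intro i j; rw [hP]; simp [Matrix.mul_apply, Matrix.conjTranspose_apply]
  have hBe : ∀ i j, B i j = ∑ l, R l i * R l j := by
    intro i j; rw [hR]; simp [Matrix.mul_apply, Matrix.conjTranspose_apply]
  have step1 : ∀ i j, x i * x j * (A i j * B i j)
      = ∑ k, ∑ l, (x i * P k i * R l i) * (x j * P k j * R l j) := by
    intro i j
    rw [hAe, hBe, Finset.sum_mul_sum]
    simp only [Finset.mul_sum]
    exact Finset.sum_congr rfl fun k _ => Finset.sum_congr rfl fun l _ => by ring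
  have step2 : ∀ k l, (∑ i, x i * P k i * R l i) ^ 2
      = ∑ i, ∑ j, (x i * P k i * R l i) * (x j * P k j * R l j) := by
    intro k l; rw [sq, Finset.sum_mul_sum]
  have key : (∑ i, ∑ j, x i * x j * (A i j * B i j))
      = ∑ k, ∑ l, (∑ i, x i * P k i * R l i) ^ 2 := by
    simp only [step1, step2]
    set g : n → n → n → n → ℝ :=
      fun k l i j => (x i * P k i * R l i) * (x j * P k j * R l j) with hg
    calc (∑ i, ∑ j, ∑ k, ∑ l, g k l i j)
        = ∑ i, ∑ k, ∑ j, ∑ l, g k l i j :=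
          Finset.sum_congr rfl fun i _ => Finset.sum_comm
      _ = ∑ k, ∑ i, ∑ j, ∑ l, g k l i j := Finset.sum_comm
      _ = ∑ k, ∑ i, ∑ l, ∑ j, g k l i j :=
          Finset.sum_congr rfl fun k _ => Finset.sum_congr rfl fun i _ => Finset.sum_comm
      _ = ∑ k, ∑ l, ∑ i, ∑ j, g k l i j :=
          Finset.sum_congr rfl fun k _ => Finset.sum_comm
  rw [key]
  exact Finset.sum_nonneg fun k _ => Finset.sum_nonneg fun l _ => sq_nonneg _

open Matrix in
/-- Schur product preservation in the M-RA recursion: the modulated predictive-process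
remainder of a positive semidefinite kernel is again positive semidefinite, provided the
modulating function is a positive semidefinite kernel. -/
theorem mra_step_psd {D : Type*} {r : ℕ}
    (v : D → D → ℝ) (hvsymm : ∀ s₁ s₂, v s₁ s₂ = v s₂ s₁) (hv : IsPSDKernel v)
    (T : D → D → ℝ) (hTpsd : IsPSDKernel T)
    (Q : Fin r → D)
    (hinv : IsUnit (Matrix.of (fun i j => v (Q i) (Q j)) : Matrix (Fin r) (Fin r) ℝ)) :
    IsPSDKernel (fun s₁ s₂ =>
      (v s₁ s₂ - ∑ i, ∑ j, v s₁ (Q i) *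
        ((Matrix.of (fun i j => v (Q i) (Q j)) : Matrix (Fin r) (Fin r) ℝ)⁻¹ i j) *
          v (Q j) s₂) * T s₁ s₂) := by
  intro n s a
  classical
  set C : Matrix (Fin r) (Fin r) ℝ := Matrix.of (fun i j => v (Q i) (Q j)) with hC
  set A : Matrix (Fin n) (Fin n) ℝ := Matrix.of (fun i j => v (s i) (s j)) with hA
  set B : Matrix (Fin n) (Fin r) ℝ := Matrix.of (fun i j => v (s i) (Q j)) with hB
  -- C is positive definite
  have hCpsd : C.PosSemidef := kernelMatrix_posSemidef hvsymm hv Q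
  letI : Invertible C := hinv.nonempty_invertible.some
  have hCpd : C.PosDef := by
    refine Matrix.PosDef.of_dotProduct_mulVec_pos hCpsd.1 (fun x hx => ?_)
    rcases (hCpsd.dotProduct_mulVec_nonneg x).lt_or_eq with h | h
    · exact h
    · exfalso
      apply hx
      have h0 : C *ᵥ x = 0 := (hCpsd.dotProduct_mulVec_zero_iff x).mp h.symm
      have := congrArg (fun y => C⁻¹ *ᵥ y) h0
      simpa [Matrix.mulVec_mulVec, Matrix.nonsing_inv_mul C
        ((Matrix.isUnit_iff_isUnit_det C).mp hinv)] using this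
  -- the big kernel matrix on s ⊕ Q
  have hbig : (Matrix.of (fun i j => v (Sum.elim s Q i) (Sum.elim s Q j))
      : Matrix (Fin n ⊕ Fin r) (Fin n ⊕ Fin r) ℝ).PosSemidef :=
    kernelMatrix_posSemidef hvsymm hv _
  have hfb : (Matrix.of (fun i j => v (Sum.elim s Q i) (Sum.elim s Q j))
      : Matrix (Fin n ⊕ Fin r) (Fin n ⊕ Fin r) ℝ) = Matrix.fromBlocks A B Bᴴ C := by
    ext i j
    cases i <;> cases j <;>
      simp [Matrix.fromBlocks, Matrix.conjTranspose_apply, hA, hB, hC, hvsymm]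
  rw [hfb] at hbig
  have hschur : (A - B * C⁻¹ * Bᴴ).PosSemidef :=
    (Matrix.PosDef.fromBlocks₂₂ A B hCpd).mp hbig
  set Rm : Matrix (Fin n) (Fin n) ℝ := A - B * C⁻¹ * Bᴴ with hRm
  -- the entries of Rm match the kernel expression
  have hentry : ∀ i j, v (s i) (s j) - (∑ k, ∑ l, v (s i) (Q k) * C⁻¹ k l * v (Q l) (s j))
      = Rm i j := by
    intro i j
    have e1 : (B * C⁻¹ * Bᴴ) i j = ∑ l, (∑ k, B i k * C⁻¹ k l) * B j l := by
      rw [Matrix.mul_apply]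
      refine Finset.sum_congr rfl fun l _ => ?_
      rw [Matrix.mul_apply, Matrix.conjTranspose_apply, star_trivial]
    have e2 : (∑ l, (∑ k, B i k * C⁻¹ k l) * B j l)
        = ∑ k, ∑ l, v (s i) (Q k) * C⁻¹ k l * v (Q l) (s j) := by
      have e3 : ∀ l, (∑ k, B i k * C⁻¹ k l) * B j l
          = ∑ k, v (s i) (Q k) * C⁻¹ k l * v (Q l) (s j) := by
        intro l
        rw [Finset.sum_mul]
        refine Finset.sum_congr rfl fun k _ => ?_
        simp only [hB, Matrix.of_apply]
        rw [hvsymm (Q l) (s j)]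
      simp only [e3]
      exact Finset.sum_comm
    show _ = (A - B * C⁻¹ * Bᴴ) i j
    rw [Matrix.sub_apply, e1, e2]
    simp [hA]
  have hRsymm : ∀ i j, Rm i j = Rm j i := fun i j => by
    conv_lhs => rw [← hschur.1]
    simp [Matrix.conjTranspose_apply]
  -- symmetrized T matrix
  set Tm : Matrix (Fin n) (Fin n) ℝ :=
    Matrix.of (fun i j => (T (s i) (s j) + T (s j) (s i)) / 2) with hTm
  have hTmpsd : Tm.PosSemidef := by
    refine Matrix.PosSemidef.of_dotProduct_mulVec_nonneg ?_ ?_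
    · ext i j
      simp [hTm, Matrix.conjTranspose_apply, add_comm]
    · intro x
      have h1 := hTpsd.quad_nonneg s x
      have h2 : star x ⬝ᵥ Tm *ᵥ x = ∑ i, ∑ j, x i * x j * T (s i) (s j) := by
        simp only [dotProduct, Matrix.mulVec, Finset.mul_sum, star_trivial,
          hTm, Matrix.of_apply]
        have swap : ∑ i, ∑ j, x i * (x j * T (s j) (s i)) / 2
            = ∑ i, ∑ j, x i * (x j * T (s i) (s j)) / 2 := by
          rw [Finset.sum_comm]
          exact Finset.sum_congr rfl fun i _ => Finset.sum_congr rfl fun j _ => by ring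
        calc ∑ i, ∑ j, x i * ((T (s i) (s j) + T (s j) (s i)) / 2 * x j)
            = ∑ i, ∑ j, (x i * (x j * T (s i) (s j)) / 2 + x i * (x j * T (s j) (s i)) / 2) := by
              exact Finset.sum_congr rfl fun i _ => Finset.sum_congr rfl fun j _ => by ring
          _ = (∑ i, ∑ j, x i * (x j * T (s i) (s j)) / 2)
              + ∑ i, ∑ j, x i * (x j * T (s j) (s i)) / 2 := by
              simp [Finset.sum_add_distrib]
          _ = ∑ i, ∑ j, x i * x j * T (s i) (s j) := by
              rw [swap, ← Finset.sum_add_distrib]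
              refine Finset.sum_congr rfl fun i _ => ?_
              rw [← Finset.sum_add_distrib]
              exact Finset.sum_congr rfl fun j _ => by ring
      rw [h2]; exact h1
  -- reduce the goal to the Schur product of Rm and Tm
  have swap : ∑ i, ∑ j, a i * a j * (Rm i j * T (s j) (s i))
      = ∑ i, ∑ j, a i * a j * (Rm i j * T (s i) (s j)) := by
    rw [Finset.sum_comm]
    exact Finset.sum_congr rfl fun i _ => Finset.sum_congr rfl fun j _ => by
      rw [hRsymm j i]; ring
  have hhalf : ∑ i, ∑ j, a i * a j * (Rm i j * Tm i j)
      = (∑ i, ∑ j, a i * a j * (Rm i j * T (s i) (s j))) / 2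
        + (∑ i, ∑ j, a i * a j * (Rm i j * T (s j) (s i))) / 2 := by
    rw [Finset.sum_div, Finset.sum_div, ← Finset.sum_add_distrib]
    refine Finset.sum_congr rfl fun i _ => ?_
    rw [Finset.sum_div, Finset.sum_div, ← Finset.sum_add_distrib]
    refine Finset.sum_congr rfl fun j _ => ?_
    simp only [hTm, Matrix.of_apply]
    ring
  have hgoal2 : (∑ i, ∑ j, a i * a j * (Rm i j * Tm i j))
      = ∑ i, ∑ j, a i * a j * (Rm i j * T (s i) (s j)) := by
    rw [hhalf, swap]; ring
  calc (0:ℝ) ≤ ∑ i, ∑ j, a i * a j * (Rm i j * Tm i j) :=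
        schur_quad_nonneg hschur hTmpsd a
    _ = ∑ i, ∑ j, a i * a j * (Rm i j * T (s i) (s j)) := hgoal2
    _ = _ := by
        refine Finset.sum_congr rfl fun i _ => Finset.sum_congr rfl fun j _ => ?_
        rw [← hentry i j]
end
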